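/- Γ is uniform if and only if H̃^0(Δ(Γ_{b,q})) = 0 for every b ∈ Γ₊ and every integer q with 3 ≤ q ≤ rk(b). -/

import Mathlib

/-- A finite ranked poset: a partial order with a unique minimal element `star`
and a rank function `rk` such that `rk star = 0`, covering relations increase the
rank by exactly one, and `rk` is strictly monotone (for a finite poset this is
equivalent to: all maximal chains in `[star, x]` have the same length `rk x`). -/
structure RankedPoset (Γ : Type) [PartialOrder Γ] where
  star : Γ
  rk : Γ → ℕ
  bot_le : ∀ x, star ≤ x
  rk_star : rk star = 0
  rk_covBy : ∀ ⦃x y : Γ⦄, x ⋖ y → rk y = rk x + 1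
  rk_strictMono : StrictMono rk

variable {Γ : Type} [PartialOrder Γ]

/-- Basis of the degree `t` part of the (shifted) reduced chain complex of the order
complex of `{a : Γ // P a}`: strictly decreasing lists `p_{t-2} > ⋯ > p₀` of length
`t - 1` of elements satisfying `P`.  Thus `t = 0` gives the zero space, `t = 1` gives
`C₋₁` (spanned by the empty list), and in general degree `t` corresponds to the
`(t-2)`-chains of the order complex. -/
abbrev OrderChainBasis (P : Γ → Prop) (t : ℕ) : Type :=
  {l : List Γ // l.length + 1 = t ∧ List.Pairwise (· > ·) l ∧ ∀ a ∈ l, P a}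

/-- The degree `t` part (`= C_{t-2}`) of the reduced chain complex over `F` of the order
complex of `{a : Γ // P a}`. -/
abbrev OrderChain (F : Type) [Field F] (P : Γ → Prop) (t : ℕ) : Type :=
  OrderChainBasis P t →₀ F

/-- The basis chain obtained by deleting the `i`-th entry of the chain `l`. -/
def OrderChainBasis.erase {P : Γ → Prop} {t : ℕ} (l : OrderChainBasis P (t + 1))
    (i : Fin l.1.length) : OrderChainBasis P t :=
  ⟨l.1.eraseIdx i, by
      have h1 := List.length_eraseIdx_add_one (l := l.1) (i := i) i.isLt
      have h2 := l.2.1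
      omega,
    List.Pairwise.sublist (l.1.eraseIdx_sublist i) l.2.2.1,
    fun a ha => l.2.2.2 a ((l.1.eraseIdx_sublist i).subset ha)⟩

/-- The simplicial boundary `∂ : C_{t-1} → C_{t-2}`,
`∂(p_n > ⋯ > p₀) = Σᵢ (-1)ⁱ (p_n > ⋯ > p̂_{n-i} > ⋯ > p₀)` (for `n = 0` this is
`∂(p₀) = 1 ∈ C₋₁`). -/
noncomputable def ocBoundary (F : Type) [Field F] (P : Γ → Prop) (t : ℕ) :
    OrderChain F P (t + 1) →ₗ[F] OrderChain F P t :=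
  Finsupp.lsum F fun l => LinearMap.toSpanSingleton F _
    (∑ i : Fin l.1.length, ((-1 : F) ^ (i : ℕ)) • Finsupp.single (l.erase i) (1 : F))

/-- `redHomology F P t` is the reduced homology `H̃_{t-1}` (over `F`) of the order complex
of `{a : Γ // P a}`: cycles in degree `t+1` (`= C_{t-1}`) modulo boundaries.  (Since the
boundary map squares to zero, boundaries are contained in cycles, and this agrees with
the usual definition; in particular `t = 0` gives `H̃₋₁`.) -/
abbrev redHomology (F : Type) [Field F] (P : Γ → Prop) (t : ℕ) : Type :=
  @HasQuotient.Quotient _ _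
    (Submodule.hasQuotient (R := F) (M := ↥(LinearMap.ker (ocBoundary F P t))))
    ((LinearMap.range (ocBoundary F P (t + 1))).comap
      (LinearMap.ker (ocBoundary F P t)).subtype)

/-- `redCohomology F P t` is the reduced cohomology `H̃^{t-1}` (over `F`) of the order
complex of `{a : Γ // P a}`, computed from the `F`-linear dual complex. -/
abbrev redCohomology (F : Type) [Field F] (P : Γ → Prop) (t : ℕ) : Type :=
  @HasQuotient.Quotient _ _
    (Submodule.hasQuotient (R := F) (M := ↥(LinearMap.ker ((ocBoundary F P (t + 1)).dualMap))))
    ((LinearMap.range ((ocBoundary F P t).dualMap)).comap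
      (LinearMap.ker ((ocBoundary F P (t + 1)).dualMap)).subtype)

/-- Membership in `Γ_{b,q} = {a | * < a < b and d(b,a) ≤ q - 1}`. -/
def memGbq (R : RankedPoset Γ) (b : Γ) (q : ℕ) (a : Γ) : Prop :=
  R.star < a ∧ a < b ∧ R.rk b - R.rk a ≤ q - 1

noncomputable example (F : Type) [Field F] (P : Γ → Prop) (t : ℕ) : Module F (redHomology F P t) :=
  inferInstance
noncomputable example (F : Type) [Field F] (P : Γ → Prop) (t : ℕ) : Module F (redCohomology F P t) :=
  inferInstance

/-- `a ∈ S_x(1)`: `a < x` and `d(x,a) = 1`. -/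
def memS1 {Γ : Type} [PartialOrder Γ] (R : RankedPoset Γ) (x a : Γ) : Prop :=
  a < x ∧ R.rk x - R.rk a = 1

/-- `Γ` is uniform if for every `x ∈ Γ₊` the equivalence relation on `S_x(1)` generated
by `a ∼_x b ↔ ∃ c ∈ S_a(1) ∩ S_b(1)` has exactly one equivalence class. -/
def RankedPoset.Uniform {Γ : Type} [PartialOrder Γ] (R : RankedPoset Γ) : Prop :=
  ∀ x : Γ, x ≠ R.star →
    (∃ a, memS1 R x a) ∧
      ∀ a b : Γ, memS1 R x a → memS1 R x b →
        Relation.EqvGen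
          (fun u v => memS1 R x u ∧ memS1 R x v ∧ ∃ c, memS1 R u c ∧ memS1 R v c) a b

/-!
`H̃⁰` of an order complex vanishes exactly when the comparability graph of the poset is
(pre)connected: a degree-0 cocycle is a function on vertices that agrees across every
comparable pair, and it is a coboundary iff it is constant.

If `Γ` is uniform, every element of `Γ_{b,q}` lies below some `a ∈ S_b(1)`, and two elements
`u ∼_b v` of `S_b(1)` are joined in `Γ_{b,q}` through their common lower cover, which has rank
`rk b - 2 ≥ 1` and so lies in `Γ_{b,q}` when `q ≥ 3`. Conversely `Γ_{x,3}` consists of the two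
top levels of `[*, x)`, so a path in its comparability graph alternates between `S_x(1)` and
the level below, and each descent followed by an ascent is a step of `∼_x`. Ranks `≤ 2` are
handled directly, `*` being a common lower cover.
-/

open Finsupp Relation

/-- The comparability graph of `{a | P a}`, i.e. the 1-skeleton of its order complex. -/
def comparabilityGraph (P : Γ → Prop) : SimpleGraph Γ where
  Adj u v := P u ∧ P v ∧ (u < v ∨ v < u)
  symm := ⟨fun _ _ h => ⟨h.2.1, h.1, h.2.2.symm⟩⟩
  loopless := ⟨fun _ h => h.2.2.elim (lt_irrefl _) (lt_irrefl _)⟩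

namespace OrderChainBasis

variable {P : Γ → Prop}

def nil : OrderChainBasis P 1 := ⟨[], rfl, List.Pairwise.nil, by simp⟩

def vertex (a : Γ) (ha : P a) : OrderChainBasis P 2 :=
  ⟨[a], rfl, List.pairwise_singleton _ _, by simpa using ha⟩

def edge {a b : Γ} (hab : a < b) (ha : P a) (hb : P b) : OrderChainBasis P 3 :=
  ⟨[b, a], rfl, by simpa using hab, by simp [ha, hb]⟩

lemma exists_eq_vertex (v : OrderChainBasis P 2) : ∃ a ha, v = vertex a ha := by
  obtain ⟨l, hl, -, hP⟩ := v
  match l, hl with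
  | [a], _ => exact ⟨a, hP a (by simp), rfl⟩

lemma exists_eq_edge (e : OrderChainBasis P 3) :
    ∃ (a b : Γ) (hab : a < b) (ha : P a) (hb : P b), e = edge hab ha hb := by
  obtain ⟨l, hl, hl', hP⟩ := e
  match l, hl with
  | [b, a], _ => exact ⟨a, b, by simpa using hl', hP a (by simp), hP b (by simp), rfl⟩

end OrderChainBasis

section ReducedH0

open OrderChainBasis

variable (F : Type) [Field F] (P : Γ → Prop)

lemma ocBoundary_single_vertex (a : Γ) (ha : P a) :
    ocBoundary F P 1 (single (vertex a ha) 1) = single nil 1 := by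
  rw [ocBoundary, lsum_single, LinearMap.toSpanSingleton_apply_one]
  exact (Fin.sum_univ_one _).trans (by simp; rfl)

lemma ocBoundary_single_edge {a b : Γ} (hab : a < b) (ha : P a) (hb : P b) :
    ocBoundary F P 2 (single (edge hab ha hb) 1) =
      single (vertex a ha) 1 - single (vertex b hb) 1 := by
  rw [ocBoundary, lsum_single, LinearMap.toSpanSingleton_apply_one]
  exact (Fin.sum_univ_two _).trans (by simp [sub_eq_add_neg]; rfl)

variable {F P}

lemma mem_ker_dualMap_ocBoundary_two_iff (f : Module.Dual F (OrderChain F P 2)) :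
    f ∈ LinearMap.ker (ocBoundary F P 2).dualMap ↔
      ∀ a b : Γ, a < b → ∀ (ha : P a) (hb : P b),
        f (single (vertex a ha) 1) = f (single (vertex b hb) 1) := by
  rw [LinearMap.mem_ker]
  constructor
  · intro hf a b hab ha hb
    have := LinearMap.congr_fun hf (single (edge hab ha hb) 1)
    rwa [LinearMap.dualMap_apply, ocBoundary_single_edge, map_sub, LinearMap.zero_apply,
      sub_eq_zero] at this
  · intro hf
    refine lhom_ext' fun e => LinearMap.ext_ring ?_
    obtain ⟨a, b, hab, ha, hb, rfl⟩ := exists_eq_edge e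
    simp [ocBoundary_single_edge, hf a b hab ha hb]

lemma mem_range_dualMap_ocBoundary_one_iff (f : Module.Dual F (OrderChain F P 2)) :
    f ∈ LinearMap.range (ocBoundary F P 1).dualMap ↔
      ∃ c : F, ∀ (a : Γ) (ha : P a), f (single (vertex a ha) 1) = c := by
  constructor
  · rintro ⟨φ, rfl⟩
    exact ⟨φ (single nil 1), fun a ha => by
      rw [LinearMap.dualMap_apply, ocBoundary_single_vertex]⟩
  · rintro ⟨c, hc⟩
    refine ⟨c • lapply nil, lhom_ext' fun v => LinearMap.ext_ring ?_⟩
    obtain ⟨a, ha, rfl⟩ := exists_eq_vertex v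
    simp [ocBoundary_single_vertex, hc a ha]

lemma subsingleton_redCohomology_one_iff_forall :
    Subsingleton (redCohomology F P 1) ↔
      ∀ f : Module.Dual F (OrderChain F P 2),
        (∀ a b : Γ, a < b → ∀ (ha : P a) (hb : P b),
          f (single (vertex a ha) 1) = f (single (vertex b hb) 1)) →
        ∃ c : F, ∀ (a : Γ) (ha : P a), f (single (vertex a ha) 1) = c :=
  Submodule.Quotient.subsingleton_iff.trans <| Submodule.comap_subtype_eq_top.trans <|
    SetLike.le_def.trans <| forall_congr' fun f =>
      imp_congr (mem_ker_dualMap_ocBoundary_two_iff f) (mem_range_dualMap_ocBoundary_one_iff f)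

theorem subsingleton_redCohomology_one_iff_reachable :
    Subsingleton (redCohomology F P 1) ↔
      ∀ a b : Γ, P a → P b → (comparabilityGraph P).Reachable a b := by
  rw [subsingleton_redCohomology_one_iff_forall]
  constructor
  · intro h a b ha hb
    classical
    -- the indicator function of the component of `a` is a cocycle
    let f : Module.Dual F (OrderChain F P 2) := linearCombination F fun v =>
      if ∀ x ∈ v.1, (comparabilityGraph P).Reachable a x then 1 else 0
    have hf : ∀ x hx, f (single (vertex x hx) 1) =
        if (comparabilityGraph P).Reachable a x then 1 else 0 := by
      simp [f, vertex]
    obtain ⟨c, hc⟩ := h f fun x y hxy hx hy => by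
      have hadj : (comparabilityGraph P).Adj x y := ⟨hx, hy, Or.inl hxy⟩
      rw [hf, hf]
      exact if_congr ⟨fun h => h.trans hadj.reachable, fun h => h.trans hadj.symm.reachable⟩
        rfl rfl
    have hca := hc a ha
    rw [← hc b hb, hf, hf, if_pos (SimpleGraph.Reachable.refl a)] at hca
    by_contra hab
    simp [hab] at hca
  · intro h f hf
    have hadj : ∀ {u v} (huv : (comparabilityGraph P).Adj u v),
        f (single (vertex u huv.1) 1) = f (single (vertex v huv.2.1) 1) := fun huv =>
      huv.2.2.elim (hf _ _ · _ _) fun hvu => (hf _ _ hvu _ _).symm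
    by_cases hP : ∃ a₀, P a₀
    · obtain ⟨a₀, ha₀⟩ := hP
      refine ⟨f (single (vertex a₀ ha₀) 1), fun a ha => ?_⟩
      obtain ⟨p⟩ := h a a₀ ha ha₀
      induction p with
      | nil => rfl
      | cons huv _ ih => exact (hadj huv).trans (ih ha₀ huv.2.1)
    · exact ⟨0, fun a ha => (hP ⟨a, ha⟩).elim⟩

end ReducedH0

namespace RankedPoset

variable (R : RankedPoset Γ)

/-- The relation `u ∼_x v` on `S_x(1)`. -/
def ShareLowerCover (x u v : Γ) : Prop :=
  memS1 R x u ∧ memS1 R x v ∧ ∃ c, memS1 R u c ∧ memS1 R v c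

variable {R}

lemma star_lt_of_rk_pos {x : Γ} (hx : 0 < R.rk x) : R.star < x :=
  (R.bot_le x).lt_of_ne fun h => by simp [← h, R.rk_star] at hx

lemma eq_star_of_rk_eq_zero {x : Γ} (hx : R.rk x = 0) : x = R.star :=
  by_contra fun h => by
    simpa [R.rk_star, hx] using R.rk_strictMono ((R.bot_le x).lt_of_ne (Ne.symm h))

lemma rk_add_one_of_memS1 {x a : Γ} (h : memS1 R x a) : R.rk a + 1 = R.rk x := by
  have := R.rk_strictMono h.1
  have := h.2
  omega

lemma memS1_of_rk {x a : Γ} (h : a < x) (hrk : R.rk a + 1 = R.rk x) : memS1 R x a :=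
  ⟨h, by omega⟩

lemma eq_of_memS1_of_le {x u v : Γ} (hu : memS1 R x u) (hv : memS1 R x v) (h : u ≤ v) :
    u = v :=
  h.eq_of_not_lt fun huv => by
    have := R.rk_strictMono huv
    have := rk_add_one_of_memS1 hu
    have := rk_add_one_of_memS1 hv
    omega

lemma exists_memS1_ge [Finite Γ] {u b : Γ} (h : u < b) : ∃ w, memS1 R b w ∧ u ≤ w := by
  obtain ⟨w, huw, hw⟩ := Finite.exists_le_maximal (p := (· < b)) h
  have hwb : w ⋖ b := ⟨hw.1, fun z hwz hzb => (hw.2 hzb hwz.le).not_gt hwz⟩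
  exact ⟨w, memS1_of_rk hwb.1 (R.rk_covBy hwb).symm, huw⟩

lemma exists_memS1_reachable_of_memGbq [Finite Γ] {b u : Γ} {q : ℕ} (hq : 2 ≤ q)
    (hu : memGbq R b q u) :
    ∃ w, memS1 R b w ∧ (comparabilityGraph (memGbq R b q)).Reachable u w := by
  obtain ⟨w, hw, huw⟩ := exists_memS1_ge hu.2.1
  refine ⟨w, hw, ?_⟩
  obtain rfl | huw := huw.eq_or_lt
  · rfl
  · exact SimpleGraph.Adj.reachable
      ⟨hu, ⟨hu.1.trans huw, hw.1, by have := hw.2; omega⟩, Or.inl huw⟩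

lemma reachable_of_shareLowerCover {b u v : Γ} {q : ℕ} (hq : 3 ≤ q) (hb : 3 ≤ R.rk b)
    (huv : R.ShareLowerCover b u v) :
    (comparabilityGraph (memGbq R b q)).Reachable u v := by
  obtain ⟨hu, hv, c, hcu, hcv⟩ := huv
  have := rk_add_one_of_memS1 hu
  have := rk_add_one_of_memS1 hcu
  have hc : memGbq R b q c :=
    ⟨star_lt_of_rk_pos (by omega), hcu.1.trans hu.1, by omega⟩
  have hu' : memGbq R b q u := ⟨hc.1.trans hcu.1, hu.1, by have := hu.2; omega⟩
  have hv' : memGbq R b q v := ⟨hc.1.trans hcv.1, hv.1, by have := hv.2; omega⟩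
  have hcu' : (comparabilityGraph (memGbq R b q)).Adj c u := ⟨hc, hu', Or.inl hcu.1⟩
  have hcv' : (comparabilityGraph (memGbq R b q)).Adj c v := ⟨hc, hv', Or.inl hcv.1⟩
  exact hcu'.symm.reachable.trans hcv'.reachable

theorem reachable_of_uniform [Finite Γ] (hR : R.Uniform) {b : Γ} (hb : b ≠ R.star) {q : ℕ}
    (hq : 3 ≤ q) (hqb : q ≤ R.rk b) (u v : Γ) (hu : memGbq R b q u) (hv : memGbq R b q v) :
    (comparabilityGraph (memGbq R b q)).Reachable u v := by
  obtain ⟨s, hs, hus⟩ := exists_memS1_reachable_of_memGbq (by omega) hu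
  obtain ⟨t, ht, hvt⟩ := exists_memS1_reachable_of_memGbq (by omega) hv
  have hst : EqvGen (R.ShareLowerCover b) s t := (hR b hb).2 s t hs ht
  have hst' := (SimpleGraph.reachable_is_equivalence _).eqvGen_iff.mp
    (hst.mono fun _ _ => reachable_of_shareLowerCover hq (hq.trans hqb))
  exact hus.trans (hst'.trans hvt.symm)

lemma memS1_of_memGbq_three_of_lt {x v w : Γ} (hv : memGbq R x 3 v) (hw : memGbq R x 3 w)
    (hvw : v < w) : memS1 R x w ∧ memS1 R w v := by
  have := R.rk_strictMono hvw
  have := R.rk_strictMono hw.2.1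
  have := hv.2.2
  exact ⟨memS1_of_rk hw.2.1 (by omega), memS1_of_rk hvw (by omega)⟩

lemma exists_memS1_ge_eqvGen_of_reachable {x a b : Γ} (ha : memS1 R x a)
    (hab : (comparabilityGraph (memGbq R x 3)).Reachable a b) :
    ∃ u, memS1 R x u ∧ b ≤ u ∧ EqvGen (R.ShareLowerCover x) a u := by
  rw [SimpleGraph.reachable_iff_reflTransGen] at hab
  induction hab with
  | refl => exact ⟨a, ha, le_rfl, EqvGen.refl a⟩
  | @tail v w _ hvw ih =>
    obtain ⟨u, hu, hvu, hau⟩ := ih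
    obtain ⟨hv, hw, hvw | hwv⟩ := hvw
    · obtain ⟨hw', hvw'⟩ := memS1_of_memGbq_three_of_lt hv hw hvw
      have := rk_add_one_of_memS1 hvw'
      have := rk_add_one_of_memS1 hw'
      have := rk_add_one_of_memS1 hu
      -- an ascent from `v` to `w ∈ S_x(1)`: `v` is a common lower cover of `u` and `w`
      have hvu' : v < u := hvu.lt_of_ne (by rintro rfl; omega)
      have hvu'' : memS1 R u v := memS1_of_rk hvu' (by omega)
      exact ⟨w, hw', le_rfl, hau.trans _ _ _ (EqvGen.rel _ _ ⟨hu, hw', v, hvu'', hvw'⟩)⟩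
    · have hv' := (memS1_of_memGbq_three_of_lt hw hv hwv).1
      exact ⟨u, hu, (eq_of_memS1_of_le hv' hu hvu ▸ hwv).le, hau⟩

lemma eqvGen_shareLowerCover_of_rk_le_two {x a b : Γ} (hx : R.rk x ≤ 2) (ha : memS1 R x a)
    (hb : memS1 R x b) : EqvGen (R.ShareLowerCover x) a b := by
  have hra := rk_add_one_of_memS1 ha
  have hrb := rk_add_one_of_memS1 hb
  obtain hx | hx := Nat.lt_or_ge (R.rk x) 2
  · rw [eq_star_of_rk_eq_zero (R := R) (x := a) (by omega),
      eq_star_of_rk_eq_zero (R := R) (x := b) (by omega)]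
    exact EqvGen.refl _
  · refine EqvGen.rel _ _ ⟨ha, hb, R.star, ?_, ?_⟩ <;>
      exact memS1_of_rk (star_lt_of_rk_pos (by omega)) (by rw [R.rk_star]; omega)

theorem uniform_of_reachable [Finite Γ]
    (h : ∀ x : Γ, x ≠ R.star → 3 ≤ R.rk x → ∀ u v : Γ, memGbq R x 3 u → memGbq R x 3 v →
      (comparabilityGraph (memGbq R x 3)).Reachable u v) :
    R.Uniform := by
  intro x hx
  refine ⟨(exists_memS1_ge ((R.bot_le x).lt_of_ne (Ne.symm hx))).imp fun _ => And.left,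
    fun a b ha hb => ?_⟩
  obtain hx3 | hx3 := Nat.lt_or_ge (R.rk x) 3
  · exact eqvGen_shareLowerCover_of_rk_le_two (by omega) ha hb
  have hra := rk_add_one_of_memS1 ha
  have hrb := rk_add_one_of_memS1 hb
  have hab := h x hx hx3 a b ⟨star_lt_of_rk_pos (by omega), ha.1, by omega⟩
    ⟨star_lt_of_rk_pos (by omega), hb.1, by omega⟩
  obtain ⟨u, hu, hbu, hau⟩ := exists_memS1_ge_eqvGen_of_reachable ha hab
  rwa [eq_of_memS1_of_le hb hu hbu]

end RankedPoset

/-- `Γ` is uniform if and only if `H̃⁰(Δ(Γ_{b,q})) = 0` for every `b ∈ Γ₊` and every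
`3 ≤ q ≤ rk b`.  (Here `H̃⁰ = redCohomology _ _ 1`.) -/
theorem uniform_iff_reduced_H0_eq_zero
    {Γ : Type} [PartialOrder Γ] [Fintype Γ] (R : RankedPoset Γ)
    (F : Type) [Field F] :
    R.Uniform ↔
      ∀ b : Γ, b ≠ R.star → ∀ q : ℕ, 3 ≤ q → q ≤ R.rk b →
        Subsingleton (redCohomology F (memGbq R b q) 1) := by
  simp only [subsingleton_redCohomology_one_iff_reachable]
  exact ⟨fun hR b hb q hq hqb => R.reachable_of_uniform hR hb hq hqb,
    fun h => R.uniform_of_reachable fun x hx hx3 => h x hx 3 le_rfl hx3⟩
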